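/- arXiv:2207.05869 — 5 statements merged into one kernel-verified Lean document; each statement's English description precedes it below -/
import Mathlib

section
/- Let X be a Poisson random variable with rate λ > 0. Then for any x > 0, the probability that X ≥ λ + x is at most exp(-x²/(2(λ+x))). -/
open MeasureTheory ProbabilityTheory Real
open scoped Nat NNReal

lemma log_one_sub_bound {v : ℝ} (h0 : 0 ≤ v) (h1 : v < 1) :
    v + v ^ 2 / 2 ≤ -Real.log (1 - v) := by
  have habs : |v| < 1 := by rwa [abs_of_nonneg h0]
  have hs := Real.hasSum_pow_div_log_of_abs_lt_one habs
  have hle := sum_le_hasSum (Finset.range 2)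
    (fun n _ => by positivity) hs
  have : ∑ n ∈ Finset.range 2, v ^ (n+1) / (n+1) = v + v ^ 2 / 2 := by
    norm_num [Finset.sum_range_succ]
  linarith [hle, this.symm.le.trans hle]

/-- Poisson upper tail bound: if `X ~ Poisson(λ)` with `λ > 0`, then for any `x > 0`,
`P(X ≥ λ + x) ≤ exp(-x²/(2(λ+x)))`. -/
theorem poisson_upper_tail (lam : NNReal) (hlam : 0 < (lam : ℝ)) (x : ℝ) (hx : 0 < x) :
    poissonMeasure lam {n : ℕ | (lam : ℝ) + x ≤ (n : ℝ)} ≤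
      ENNReal.ofReal (Real.exp (-x ^ 2 / (2 * ((lam : ℝ) + x)))) := by
  set a : ℝ := (lam : ℝ) + x with ha
  have hapos : 0 < a := by positivity
  set a' : ℝ≥0 := lam + x.toNNReal with ha'
  have ha'a : (a' : ℝ) = a := by
    simp [ha', Real.coe_toNNReal _ hx.le, ha]
  set t : ℝ := Real.log (a / lam) with ht
  have hdiv : 1 < a / lam := by
    rw [lt_div_iff₀ hlam]; linarith
  have htpos : 0 < t := Real.log_pos hdiv
  have het : Real.exp t = a / lam := Real.exp_log (by positivity)
  set S : Set ℕ := {n : ℕ | (lam : ℝ) + x ≤ (n : ℝ)} with hS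
  set c : ℝ := Real.exp (x - t * a) with hc
  -- pointwise Chernoff bound
  have key : ∀ n : ℕ, S.indicator (poissonPMF lam) n ≤
      ENNReal.ofReal (c * poissonPMFReal a' n) := by
    intro n
    by_cases hn : n ∈ S
    · rw [Set.indicator_of_mem hn]
      show ENNReal.ofReal (poissonPMFReal lam n) ≤ _
      apply ENNReal.ofReal_le_ofReal
      have hao : (a' : ℝ) ^ n = (lam : ℝ) ^ n * Real.exp (t * n) := by
        rw [ha'a]
        have : a = (lam : ℝ) * Real.exp t := by
          rw [het]; field_simp
        rw [this, mul_pow, ← Real.exp_nat_mul, mul_comm (n : ℝ) t]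
      have hxa : x - a = -(lam : ℝ) := by rw [ha]; ring
      unfold poissonPMFReal
      rw [hao, ha'a]
      have hna : a ≤ (n : ℝ) := hn
      have h1 : (1:ℝ) ≤ rexp (t * ((n:ℝ) - a)) := by
        rw [show (1:ℝ) = rexp 0 by simp]
        exact Real.exp_le_exp.mpr (by nlinarith)
      have e : rexp (x - t*a) * rexp (-a) * rexp (t*(n:ℝ))
          = rexp (t*((n:ℝ)-a)) * rexp (-(lam:ℝ)) := by
        rw [← Real.exp_add, ← Real.exp_add, ← Real.exp_add, ← hxa]; congr 1; ring
      have h2 : c * (rexp (-a) * ((lam:ℝ)^n * rexp (t*(n:ℝ))) / (n ! : ℝ))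
          = rexp (t*((n:ℝ)-a)) * (rexp (-(lam:ℝ)) * (lam:ℝ)^n / (n ! : ℝ)) := by
        rw [hc]
        calc rexp (x - t*a) * (rexp (-a) * ((lam:ℝ)^n * rexp (t*(n:ℝ))) / (n ! : ℝ))
            = (rexp (x - t*a) * rexp (-a) * rexp (t*(n:ℝ))) * ((lam:ℝ)^n / (n ! : ℝ)) := by
              ring
          _ = (rexp (t*((n:ℝ)-a)) * rexp (-(lam:ℝ))) * ((lam:ℝ)^n / (n ! : ℝ)) := by rw [e]
          _ = _ := by ring
      rw [h2]
      exact le_mul_of_one_le_left (by positivity) h1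
    · rw [Set.indicator_of_notMem hn]
      exact (zero_le : (0:ENNReal) ≤ _)
  have hSm : MeasurableSet S := MeasurableSet.of_discrete
  have hμ : poissonMeasure lam S = ∑' n, S.indicator (poissonPMF lam) n := by
    rw [← (poissonPMF lam).toMeasure_apply hSm]
    congr 1
    refine Measure.ext_iff_singleton.mpr fun n => ?_
    rw [poissonMeasure_singleton, PMF.toMeasure_apply_singleton _ _ (measurableSet_singleton n),
      ← poissonPMFReal_ofReal_eq_poissonPMF]
    rfl
  have hsum : (∑' n, ENNReal.ofReal (c * poissonPMFReal a' n))
      = ENNReal.ofReal c := by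
    have hconv : ∀ n, ENNReal.ofReal (c * poissonPMFReal a' n)
        = ENNReal.ofReal c * poissonPMF a' n := by
      intro n
      show _ = ENNReal.ofReal c * ENNReal.ofReal (poissonPMFReal a' n)
      rw [← ENNReal.ofReal_mul (by positivity)]
    simp_rw [hconv]
    rw [ENNReal.tsum_mul_left, (poissonPMF a').tsum_coe, mul_one]
  calc poissonMeasure lam S ≤ ∑' n, ENNReal.ofReal (c * poissonPMFReal a' n) := by
        rw [hμ]; exact ENNReal.tsum_le_tsum key
    _ = ENNReal.ofReal c := hsum
    _ ≤ ENNReal.ofReal (Real.exp (-x ^ 2 / (2 * a))) := by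
        apply ENNReal.ofReal_le_ofReal
        rw [hc]
        apply Real.exp_le_exp.mpr
        -- need x - t * a ≤ -x^2/(2a)
        set v : ℝ := x / a with hv
        have hv0 : 0 < v := by positivity
        have hv1 : v < 1 := by
          rw [hv, div_lt_one hapos]; linarith
        have h1v : 1 - v = (lam:ℝ)/a := by
          rw [hv]; field_simp; rw [ha]; ring
        have hlg : t = -Real.log (1 - v) := by
          rw [ht, h1v, ← Real.log_inv, inv_div]
        have hb := log_one_sub_bound hv0.le hv1
        rw [← hlg] at hb
        have : a * (v + v ^ 2 / 2) ≤ a * t :=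
          mul_le_mul_of_nonneg_left hb hapos.le
        have hav : a * v = x := by rw [hv]; field_simp
        have hav2 : a * (v ^ 2 / 2) = x ^ 2 / (2 * a) := by
          rw [hv]; field_simp
        have hexp : a * (v + v ^ 2 / 2) = x + x ^ 2 / (2 * a) := by
          rw [mul_add, hav, hav2]
        have hneg : -x ^ 2 / (2 * a) = -(x ^ 2 / (2 * a)) := by ring
        rw [hneg]
        linarith
end

section
/- Let X be a Poisson random variable with rate λ > 0. Then for any x with 0 < x, the probability that X ≤ λ - x is at most exp(-x²/(2(λ+x))). -/
open MeasureTheory ProbabilityTheory Real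

/-- Poisson lower tail bound: if `X ~ Poisson(λ)` with `λ > 0`, then for any `x > 0`,
`P(X ≤ λ - x) ≤ exp(-x²/(2(λ+x)))`. -/
theorem poisson_lower_tail (lam : NNReal) (hlam : 0 < (lam : ℝ)) (x : ℝ) (hx : 0 < x) :
    poissonMeasure lam {n : ℕ | (n : ℝ) ≤ (lam : ℝ) - x} ≤
      ENNReal.ofReal (Real.exp (-x ^ 2 / (2 * ((lam : ℝ) + x)))) := by
  by_cases hxl : (lam : ℝ) - x < 0
  · have hempty : {n : ℕ | (n : ℝ) ≤ (lam : ℝ) - x} = ∅ := by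
      ext n
      simp only [Set.mem_setOf_eq, Set.mem_empty_iff_false, iff_false, not_le]
      have : (0 : ℝ) ≤ (n : ℝ) := Nat.cast_nonneg n
      linarith
    rw [hempty]
    simp [Real.exp_nonneg]
  push_neg at hxl
  set t : ℝ := x / lam with ht
  have ht0 : 0 < t := div_pos hx hlam
  have htl : t * (lam : ℝ) = x := div_mul_cancel₀ x hlam.ne'
  -- upper bound on exp(-t)
  have hexp : Real.exp (-t) ≤ 1 - t + t ^ 2 / 2 := by
    have h1 : 1 + t + t ^ 2 / 2 ≤ Real.exp t := Real.quadratic_le_exp_of_nonneg ht0.le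
    have h2 : Real.exp (-t) * Real.exp t = 1 := by
      rw [← Real.exp_add]; simp
    nlinarith [Real.exp_pos t, Real.exp_pos (-t), sq_nonneg t, sq_nonneg (t ^ 2),
      mul_pos (Real.exp_pos (-t)) (Real.exp_pos t)]
  -- the Chernoff sum
  have hsum : HasSum
      (fun n : ℕ => Real.exp (t * ((lam : ℝ) - x)) * (Real.exp (-t * n) * poissonPMFReal lam n))
      (Real.exp (t * ((lam : ℝ) - x) - (lam : ℝ) + (lam : ℝ) * Real.exp (-t))) := by
    have h1 : HasSum (fun n : ℕ => ((lam : ℝ) * Real.exp (-t)) ^ n / (Nat.factorial n))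
        (Real.exp ((lam : ℝ) * Real.exp (-t))) := by
      rw [Real.exp_eq_exp_ℝ]
      exact NormedSpace.expSeries_div_hasSum_exp _
    have h2 := (h1.mul_left (Real.exp (-(lam : ℝ)))).mul_left (Real.exp (t * ((lam : ℝ) - x)))
    have hfun : (fun n : ℕ => Real.exp (t * ((lam : ℝ) - x)) *
        (Real.exp (-t * n) * poissonPMFReal lam n)) =
        fun n : ℕ => Real.exp (t * ((lam : ℝ) - x)) *
          (Real.exp (-(lam : ℝ)) * (((lam : ℝ) * Real.exp (-t)) ^ n / (Nat.factorial n))) := by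
      funext n
      unfold poissonPMFReal
      rw [mul_pow, ← Real.exp_nat_mul]
      ring_nf
    have hval : Real.exp (t * ((lam : ℝ) - x)) *
        (Real.exp (-(lam : ℝ)) * Real.exp ((lam : ℝ) * Real.exp (-t))) =
        Real.exp (t * ((lam : ℝ) - x) - (lam : ℝ) + (lam : ℝ) * Real.exp (-t)) := by
      rw [← Real.exp_add, ← Real.exp_add]
      ring_nf
    rw [hfun, ← hval]
    exact h2
  have hnonneg : ∀ n : ℕ,
      0 ≤ Real.exp (t * ((lam : ℝ) - x)) * (Real.exp (-t * n) * poissonPMFReal lam n) :=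
    fun n => mul_nonneg (Real.exp_nonneg _)
      (mul_nonneg (Real.exp_nonneg _) poissonPMFReal_nonneg)
  -- measure as tsum
  have hmeas : poissonMeasure lam {n : ℕ | (n : ℝ) ≤ (lam : ℝ) - x} =
      ∑' n : ℕ, ({n : ℕ | (n : ℝ) ≤ (lam : ℝ) - x}).indicator (poissonPMF lam) n :=
    by
      rw [poissonMeasure, Measure.sum_apply _ MeasurableSet.of_discrete]
      congr 1; funext n
      rw [Measure.smul_apply, Measure.dirac_apply' _ MeasurableSet.of_discrete, smul_eq_mul]
      by_cases hn : n ∈ {n : ℕ | (n : ℝ) ≤ (lam : ℝ) - x}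
      · rw [Set.indicator_of_mem hn, Set.indicator_of_mem hn, Pi.one_apply, mul_one,
          ← poissonPMFReal_ofReal_eq_poissonPMF]
        rfl
      · rw [Set.indicator_of_notMem hn, Set.indicator_of_notMem hn, mul_zero]
  rw [hmeas]
  calc ∑' n : ℕ, ({n : ℕ | (n : ℝ) ≤ (lam : ℝ) - x}).indicator (poissonPMF lam) n
      ≤ ∑' n : ℕ, ENNReal.ofReal
          (Real.exp (t * ((lam : ℝ) - x)) * (Real.exp (-t * n) * poissonPMFReal lam n)) := by
        apply ENNReal.tsum_le_tsum
        intro n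
        by_cases hn : (n : ℝ) ≤ (lam : ℝ) - x
        · rw [Set.indicator_of_mem (show n ∈ {n : ℕ | (n : ℝ) ≤ (lam : ℝ) - x} from hn)]
          show ENNReal.ofReal (poissonPMFReal lam n) ≤ _
          apply ENNReal.ofReal_le_ofReal
          have hfac : 1 ≤ Real.exp (t * ((lam : ℝ) - x)) * Real.exp (-t * n) := by
            rw [← Real.exp_add, ← Real.exp_zero]
            apply Real.exp_le_exp.mpr
            nlinarith
          calc poissonPMFReal lam n = 1 * poissonPMFReal lam n := (one_mul _).symm
            _ ≤ Real.exp (t * ((lam : ℝ) - x)) * Real.exp (-t * n) * poissonPMFReal lam n :=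
                mul_le_mul_of_nonneg_right hfac poissonPMFReal_nonneg
            _ = _ := by ring
        · rw [Set.indicator_of_notMem (show n ∉ {n : ℕ | (n : ℝ) ≤ (lam : ℝ) - x} from hn)]
          exact zero_le
    _ = ENNReal.ofReal (Real.exp (t * ((lam : ℝ) - x) - (lam : ℝ) + (lam : ℝ) * Real.exp (-t))) := by
        rw [← ENNReal.ofReal_tsum_of_nonneg hnonneg hsum.summable, hsum.tsum_eq]
    _ ≤ ENNReal.ofReal (Real.exp (-x ^ 2 / (2 * ((lam : ℝ) + x)))) := by
        apply ENNReal.ofReal_le_ofReal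
        apply Real.exp_le_exp.mpr
        -- exponent inequality
        have hl : (lam : ℝ) * Real.exp (-t) ≤ (lam : ℝ) * (1 - t + t ^ 2 / 2) :=
          mul_le_mul_of_nonneg_left hexp hlam.le
        rw [le_div_iff₀ (by positivity : (0:ℝ) < 2 * ((lam : ℝ) + x))]
        nlinarith [mul_nonneg ht0.le (sq_nonneg x), sq_nonneg x, mul_pos ht0 hx,
          mul_le_mul_of_nonneg_right hl (by positivity : (0:ℝ) ≤ 2 * ((lam : ℝ) + x))]
end

section
/- Define the sequence (αᵢ) by α₀ = 0, α₁ = 1, and αᵢ = 2c₀ log(1 + Σ_{j=1}^{i-1} αⱼ) for i ≥ 2, where 0 < c₀ ≤ 1/4. Then αᵢ ≤ (1 + 4c₀) log i for all i ≥ 2. -/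
open Real Finset

lemma alpha_seq_aux (c₀ : ℝ) (hc0 : 0 < c₀) (hc : c₀ ≤ 1 / 4)
    (α : ℕ → ℝ) (h0 : α 0 = 0) (h1 : α 1 = 1)
    (hrec : ∀ i, 2 ≤ i → α i = 2 * c₀ * Real.log (1 + ∑ j ∈ Finset.Icc 1 (i - 1), α j)) :
    ∀ i, (0 ≤ α i ∧ α i ≤ i) ∧ (2 ≤ i → α i ≤ 4 * c₀ * Real.log i) := by
  intro i
  induction i using Nat.strong_induction_on with
  | _ i ih =>
    match i with
    | 0 => refine ⟨⟨by simp [h0], by simp [h0]⟩, by omega⟩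
    | 1 => refine ⟨⟨by simp [h1], by simp [h1]⟩, by omega⟩
    | (n+2) =>
      have hrec' := hrec (n+2) (by omega)
      rw [show n + 2 - 1 = n + 1 from rfl] at hrec'
      set S : ℝ := ∑ j ∈ Finset.Icc 1 (n + 1), α j with hSdef
      have hS0 : 0 ≤ S := by
        apply Finset.sum_nonneg
        intro j hj
        exact (ih j (by simp at hj; omega)).1.1
      have hSle : S ≤ ((n+1) : ℝ) * ((n+1) : ℝ) := by
        have := Finset.sum_le_card_nsmul (Finset.Icc 1 (n+1)) α ((n+1 : ℕ) : ℝ)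
          (fun j hj => by
            have hj' : j ≤ n + 1 := by simp at hj; omega
            exact (ih j (by omega)).1.2.trans (by exact_mod_cast Nat.cast_le.mpr hj'))
        have hc' : ((Finset.Icc 1 (n+1)).card : ℝ) = (n+1 : ℝ) := by
          simp [Nat.card_Icc]
        rw [nsmul_eq_mul, hc'] at this
        push_cast at this ⊢
        linarith
      have h1S : (1 : ℝ) ≤ 1 + S := by linarith
      have hsq : 1 + S ≤ ((n+2 : ℕ) : ℝ) ^ 2 := by
        push_cast
        nlinarith
      have hlog1 : 0 ≤ Real.log (1 + S) := Real.log_nonneg h1S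
      have hlog2 : Real.log (1 + S) ≤ 2 * Real.log ((n+2 : ℕ) : ℝ) := by
        calc Real.log (1 + S) ≤ Real.log (((n+2 : ℕ) : ℝ) ^ 2) :=
              Real.log_le_log (by linarith) hsq
          _ = 2 * Real.log ((n+2 : ℕ) : ℝ) := by
              rw [Real.log_pow]; push_cast; ring
      have hlogn0 : 0 ≤ Real.log ((n+2 : ℕ) : ℝ) := by
        apply Real.log_nonneg
        push_cast; linarith
      have hkey : α (n+2) ≤ 4 * c₀ * Real.log ((n+2 : ℕ) : ℝ) := by
        rw [hrec']
        nlinarith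
      have hnn : 0 ≤ α (n+2) := by
        rw [hrec']
        positivity
      refine ⟨⟨hnn, ?_⟩, fun _ => hkey⟩
      have hlogle : Real.log ((n+2 : ℕ) : ℝ) ≤ ((n+2 : ℕ) : ℝ) := by
        have := Real.log_le_sub_one_of_pos (x := ((n+2 : ℕ) : ℝ)) (by positivity)
        linarith
      calc α (n+2) ≤ 4 * c₀ * Real.log ((n+2 : ℕ) : ℝ) := hkey
        _ ≤ 1 * Real.log ((n+2 : ℕ) : ℝ) := by nlinarith
        _ ≤ ((n+2 : ℕ) : ℝ) := by linarith

/-- For the sequence `α₀ = 0`, `α₁ = 1`, `αᵢ = 2c₀ log(1 + Σ_{j=1}^{i-1} αⱼ)` for `i ≥ 2`,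
with `0 < c₀ ≤ 1/4`, we have `αᵢ ≤ (1 + 4c₀) log i` for all `i ≥ 2`. -/
theorem alpha_seq_log_upper_bound (c₀ : ℝ) (hc0 : 0 < c₀) (hc : c₀ ≤ 1 / 4)
    (α : ℕ → ℝ) (h0 : α 0 = 0) (h1 : α 1 = 1)
    (hrec : ∀ i, 2 ≤ i → α i = 2 * c₀ * Real.log (1 + ∑ j ∈ Finset.Icc 1 (i - 1), α j)) :
    ∀ i, 2 ≤ i → α i ≤ (1 + 4 * c₀) * Real.log i := by
  intro i hi
  have h := (alpha_seq_aux c₀ hc0 hc α h0 h1 hrec i).2 hi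
  have hlog : 0 ≤ Real.log (i : ℝ) := by
    apply Real.log_nonneg
    exact_mod_cast Nat.one_le_cast.mpr (by omega)
  nlinarith
end

section
/- Define the sequence (αᵢ) by α₀ = 0, α₁ = 1, and αᵢ = 2c₀ log(1 + Σ_{j=1}^{i-1} αⱼ) for i ≥ 2, where c₀ > 0. Then for all sufficiently large i, αᵢ ≥ c₀ log(1 + Σ_{j=1}^{i} αⱼ). -/
open Real Finset

/-- For the sequence `α₀ = 0`, `α₁ = 1`, `αᵢ = 2c₀ log(1 + Σ_{j=1}^{i-1} αⱼ)` for `i ≥ 2`,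
with `c₀ > 0`, for all sufficiently large `i` we have `αᵢ ≥ c₀ log(1 + Σ_{j=1}^{i} αⱼ)`. -/
theorem alpha_seq_eventually_ge (c₀ : ℝ) (hc0 : 0 < c₀)
    (α : ℕ → ℝ) (h0 : α 0 = 0) (h1 : α 1 = 1)
    (hrec : ∀ i, 2 ≤ i → α i = 2 * c₀ * Real.log (1 + ∑ j ∈ Finset.Icc 1 (i - 1), α j)) :
    ∃ N : ℕ, ∀ i, N ≤ i → c₀ * Real.log (1 + ∑ j ∈ Finset.Icc 1 i, α j) ≤ α i := by
  set S : ℕ → ℝ := fun i => ∑ j ∈ Finset.Icc 1 i, α j with hSdef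
  have hS0 : S 0 = 0 := by simp [hSdef]
  have hstep : ∀ m, S (m+1) = S m + α (m+1) := by
    intro m
    simp [hSdef, Finset.sum_Icc_succ_top (Nat.le_add_left 1 m)]
  have hS1 : S 1 = 1 := by rw [hstep 0, hS0, h1]; ring
  have hrec' : ∀ m, α (m+2) = 2 * c₀ * Real.log (1 + S (m+1)) := by
    intro m
    simpa [hSdef] using hrec (m+2) (by omega)
  have hSnn : ∀ i, 0 ≤ S i := by
    intro i
    induction i with
    | zero => simp [hS0]
    | succ n ih =>
      rw [hstep]
      have hα : 0 ≤ α (n+1) := by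
        rcases n with _ | m
        · simp [h1]
        · rw [hrec' m]
          have : 0 ≤ Real.log (1 + S (m+1)) := Real.log_nonneg (by linarith)
          positivity
      linarith
  have hαnn : ∀ m, 0 ≤ α (m+1) := by
    intro m
    rcases m with _ | m
    · simp [h1]
    · rw [hrec' m]
      have : 0 ≤ Real.log (1 + S (m+1)) := Real.log_nonneg (by linarith [hSnn (m+1)])
      positivity
  have hmono : Monotone S := by
    apply monotone_nat_of_le_succ
    intro n
    rw [hstep]
    linarith [hαnn n]
  have hS1le : ∀ k, 1 ≤ S (k+1) := by
    intro k
    have := hmono (Nat.le_add_left 1 k)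
    rw [hS1] at this; linarith
  set d : ℝ := 2 * c₀ * Real.log 2 with hd
  have hdpos : 0 < d := by
    have : 0 < Real.log 2 := Real.log_pos (by norm_num)
    positivity
  have hgrow : ∀ k, 1 + k * d ≤ S (k+1) := by
    intro k
    induction k with
    | zero => simp [hS1]
    | succ n ih =>
      rw [hstep, hrec' n]
      have hlog : Real.log 2 ≤ Real.log (1 + S (n+1)) := by
        apply Real.log_le_log (by norm_num)
        linarith [hS1le n]
      have : d ≤ 2 * c₀ * Real.log (1 + S (n+1)) := by
        rw [hd]; nlinarith
      push_cast
      nlinarith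
  set k0 : ℕ := ⌈2 * c₀ / d⌉₊ with hk0
  refine ⟨k0 + 2, ?_⟩
  intro i hi
  obtain ⟨m, rfl⟩ : ∃ m, i = m + 2 := ⟨i - 2, by omega⟩
  set T : ℝ := S (m+1) with hT
  have hT2c : 2 * c₀ ≤ T := by
    have h1' : (2 * c₀ / d : ℝ) ≤ k0 := Nat.le_ceil _
    have hk0d : 2 * c₀ ≤ k0 * d := by
      rw [div_le_iff₀ hdpos] at h1'; linarith
    have := hgrow k0
    have hmon := hmono (show k0 + 1 ≤ m + 1 by omega)
    rw [hT]; nlinarith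
  have hT1 : 1 ≤ T := hS1le m
  have hα : α (m+2) = 2 * c₀ * Real.log (1 + T) := hrec' m
  have hSi : S (m+2) = T + 2 * c₀ * Real.log (1 + T) := by
    rw [hstep, hα]
  have hlogT : Real.log (1 + T) ≤ T := by
    have := Real.log_le_sub_one_of_pos (show (0:ℝ) < 1 + T by linarith)
    linarith
  have hlognn : 0 ≤ Real.log (1 + T) := Real.log_nonneg (by linarith)
  have hbound : 1 + S (m+2) ≤ (1 + T)^2 := by
    rw [hSi]; nlinarith
  have hlog2 : Real.log (1 + S (m+2)) ≤ 2 * Real.log (1 + T) := by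
    have hpos : 0 < 1 + S (m+2) := by rw [hSi]; nlinarith
    calc Real.log (1 + S (m+2)) ≤ Real.log ((1+T)^2) := Real.log_le_log hpos hbound
      _ = 2 * Real.log (1 + T) := by rw [Real.log_pow]; push_cast; ring
  show c₀ * Real.log (1 + S (m+2)) ≤ α (m+2)
  rw [hα]
  nlinarith
end

section
/- Define (αᵢ) by α₀ = 0, α₁ = 1, αᵢ = 2c₀ log(1 + Σ_{j=1}^{i-1} αⱼ) for i ≥ 2, with 0 < c₀ ≤ 1/(2c₂) and c₂ > 0. Then Σ_{i=2}^∞ exp(-c₂ αᵢ) = ∞. -/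
open Real Finset

/-- For the sequence `α₀ = 0`, `α₁ = 1`, `αᵢ = 2c₀ log(1 + Σ_{j=1}^{i-1} αⱼ)` for `i ≥ 2`,
with `0 < c₀ ≤ 1/(2c₂)` and `c₂ > 0`, the series `Σ_{i=2}^∞ exp(-c₂ αᵢ)` diverges. -/
theorem alpha_seq_exp_not_summable (c₀ c₂ : ℝ) (hc2 : 0 < c₂) (hc0 : 0 < c₀)
    (hc : c₀ ≤ 1 / (2 * c₂))
    (α : ℕ → ℝ) (h0 : α 0 = 0) (h1 : α 1 = 1)
    (hrec : ∀ i, 2 ≤ i → α i = 2 * c₀ * Real.log (1 + ∑ j ∈ Finset.Icc 1 (i - 1), α j)) :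
    ¬ Summable (fun i : ℕ => Real.exp (-c₂ * α (i + 2))) := by
  intro hsum
  have hc' : 2 * c₀ * c₂ ≤ 1 := by
    rw [le_div_iff₀ (by positivity)] at hc
    nlinarith
  set S : ℕ → ℝ := fun n => ∑ j ∈ Finset.Icc 1 n, α j with hSdef
  have hstep : ∀ n, S (n + 1) = S n + α (n + 1) := by
    intro n
    simp only [hSdef]
    exact Finset.sum_Icc_succ_top (Nat.le_add_left 1 n) α
  have hS1 : S 1 = 1 := by simp [hSdef, h1]
  have hα : ∀ n : ℕ, α (n + 2) = 2 * c₀ * Real.log (1 + S (n + 1)) := by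
    intro n
    have := hrec (n + 2) (by omega)
    simpa [hSdef] using this
  have hSge : ∀ n : ℕ, 1 ≤ S (n + 1) := by
    intro n
    induction n with
    | zero => simp [hS1]
    | succ k ih =>
      have hαnn : 0 ≤ α (k + 2) := by
        rw [hα k]
        have : (0:ℝ) ≤ Real.log (1 + S (k + 1)) :=
          Real.log_nonneg (by linarith)
        positivity
      have := hstep (k + 1)
      linarith
  set c : ℝ := 2 * c₀ * Real.log 2 with hcdef
  have hcpos : 0 < c := by
    have := Real.log_pos one_lt_two
    positivity
  have hαge : ∀ n : ℕ, c ≤ α (n + 2) := by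
    intro n
    rw [hα n, hcdef]
    have h2 : (2:ℝ) ≤ 1 + S (n + 1) := by linarith [hSge n]
    have := Real.log_le_log (by norm_num) h2
    nlinarith
  have hSlin : ∀ n : ℕ, 1 + n * c ≤ S (n + 1) := by
    intro n
    induction n with
    | zero => simp [hS1]
    | succ k ih =>
      have := hstep (k + 1)
      have := hαge k
      push_cast
      nlinarith
  set L : ℕ → ℝ := fun n => Real.log (1 + S n) with hLdef
  have hLge : ∀ n : ℕ, Real.log 2 ≤ L (n + 1) := by
    intro n
    exact Real.log_le_log (by norm_num) (by linarith [hSge n])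
  have hLpos : ∀ n : ℕ, 0 < L (n + 1) := fun n =>
    lt_of_lt_of_le (Real.log_pos one_lt_two) (hLge n)
  -- key inequality
  have key : ∀ n : ℕ, Real.log (L (n + 2)) - Real.log (L (n + 1)) ≤
      2 * c₀ * Real.exp (-c₂ * α (n + 2)) := by
    intro n
    have hSi : 1 ≤ S (n + 1) := hSge n
    have hLi : 0 < L (n + 1) := hLpos n
    have hαe : α (n + 2) = 2 * c₀ * L (n + 1) := hα n
    have hαpos : 0 < α (n + 2) := by rw [hαe]; positivity
    have h1S : (0:ℝ) < 1 + S (n + 1) := by linarith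
    have h1S' : (0:ℝ) < 1 + S (n + 2) := by linarith [hSge (n + 1)]
    -- step A : L (n+2) - L (n+1) ≤ α (n+2) / (1 + S (n+1))
    have hstepA : L (n + 2) - L (n + 1) ≤ α (n + 2) / (1 + S (n + 1)) := by
      have hd : L (n + 2) - L (n + 1) = Real.log ((1 + S (n + 2)) / (1 + S (n + 1))) :=
        (Real.log_div (ne_of_gt h1S') (ne_of_gt h1S)).symm
      have hratio : (1 + S (n + 2)) / (1 + S (n + 1)) = 1 + α (n + 2) / (1 + S (n + 1)) := by
        rw [hstep (n + 1)]; field_simp; ring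
      have hlog := Real.log_le_sub_one_of_pos
        (x := 1 + α (n + 2) / (1 + S (n + 1))) (by positivity)
      rw [hd, hratio]
      linarith
    have hLmono : L (n + 1) ≤ L (n + 2) := by
      apply Real.log_le_log h1S
      have := hstep (n + 1)
      linarith [hαpos.le]
    have hL2pos : 0 < L (n + 2) := lt_of_lt_of_le hLi hLmono
    -- step B
    have hstepB : Real.log (L (n + 2)) - Real.log (L (n + 1)) ≤
        (L (n + 2) - L (n + 1)) / L (n + 1) := by
      have hd : Real.log (L (n + 2)) - Real.log (L (n + 1)) =
          Real.log (L (n + 2) / L (n + 1)) :=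
        (Real.log_div (ne_of_gt hL2pos) (ne_of_gt hLi)).symm
      have hlog := Real.log_le_sub_one_of_pos (x := L (n + 2) / L (n + 1)) (by positivity)
      have heq : L (n + 2) / L (n + 1) - 1 = (L (n + 2) - L (n + 1)) / L (n + 1) := by
        field_simp
      rw [hd]
      linarith [hlog, heq ▸ hlog]
    -- step C
    have hstepC : (L (n + 2) - L (n + 1)) / L (n + 1) ≤ 2 * c₀ / (1 + S (n + 1)) := by
      rw [div_le_div_iff₀ hLi h1S]
      have hA' : (L (n + 2) - L (n + 1)) * (1 + S (n + 1)) ≤ α (n + 2) := by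
        have h := mul_le_mul_of_nonneg_right hstepA h1S.le
        rwa [div_mul_cancel₀ _ (ne_of_gt h1S)] at h
      rw [hαe] at hA'
      nlinarith
    -- step D
    have hexp : Real.exp (L (n + 1)) = 1 + S (n + 1) := Real.exp_log h1S
    have hstepD : 2 * c₀ / (1 + S (n + 1)) ≤ 2 * c₀ * Real.exp (-c₂ * α (n + 2)) := by
      rw [div_eq_mul_inv]
      apply mul_le_mul_of_nonneg_left _ (by positivity)
      rw [← hexp, ← Real.exp_neg]
      apply Real.exp_le_exp.mpr
      rw [hαe]
      nlinarith [hLi.le]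
    linarith
  -- telescoping bound on partial sums
  set B : ℝ := 2 * c₀ * ∑' i, Real.exp (-c₂ * α (i + 2)) with hBdef
  have htel : ∀ n : ℕ, Real.log (L (n + 1)) - Real.log (L 1) ≤ B := by
    intro n
    have h1eq : Real.log (L (n + 1)) - Real.log (L 1) =
        ∑ i ∈ Finset.range n, (Real.log (L (i + 2)) - Real.log (L (i + 1))) := by
      rw [Finset.sum_range_sub (fun k => Real.log (L (k + 1)))]
    rw [h1eq]
    calc ∑ i ∈ Finset.range n, (Real.log (L (i + 2)) - Real.log (L (i + 1)))
        ≤ ∑ i ∈ Finset.range n, 2 * c₀ * Real.exp (-c₂ * α (i + 2)) :=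
          Finset.sum_le_sum fun i _ => key i
      _ = 2 * c₀ * ∑ i ∈ Finset.range n, Real.exp (-c₂ * α (i + 2)) := by
          rw [Finset.mul_sum]
      _ ≤ B := by
          rw [hBdef]
          apply mul_le_mul_of_nonneg_left _ (by positivity)
          exact Summable.sum_le_tsum _ (fun i _ => (Real.exp_pos _).le) hsum
  -- the left side tends to infinity
  have hT0 : Filter.Tendsto (fun n : ℕ => 2 + (n : ℝ) * c) Filter.atTop Filter.atTop := by
    apply Filter.tendsto_atTop_add_const_left
    exact Filter.Tendsto.atTop_mul_const hcpos tendsto_natCast_atTop_atTop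
  have hT : Filter.Tendsto (fun n : ℕ => Real.log (L (n + 1))) Filter.atTop Filter.atTop := by
    apply Filter.tendsto_atTop_mono (f := fun n : ℕ => Real.log (Real.log (2 + (n : ℝ) * c)))
    · intro n
      have h2 : (2:ℝ) + n * c ≤ 1 + S (n + 1) := by
        have := hSlin n
        linarith
      have hnc : (0:ℝ) ≤ (n:ℝ) * c := by positivity
      have hp2 : (1:ℝ) < 2 + n * c := by linarith
      have hlog1 : Real.log (2 + n * c) ≤ L (n + 1) :=
        Real.log_le_log (by linarith) h2
      exact Real.log_le_log (Real.log_pos hp2) hlog1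
    · exact Real.tendsto_log_atTop.comp (Real.tendsto_log_atTop.comp hT0)
  have hT' : Filter.Tendsto (fun n : ℕ => Real.log (L (n + 1)) - Real.log (L 1))
      Filter.atTop Filter.atTop := by
    simp only [sub_eq_add_neg]
    exact Filter.tendsto_atTop_add_const_right _ _ hT
  obtain ⟨n, hn⟩ := (hT'.eventually_gt_atTop B).exists
  exact absurd (htel n) (not_le.mpr hn)
end
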